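/- arXiv:2501.03086 — 3 statements merged into one kernel-verified Lean document; each statement's English description precedes it below -/
import Mathlib

section
/- Let K be an m-simplex in ℝ^d with full-rank edge matrix E_K and minimum height a_K (the minimum over j of the distance from vertex x_j to the opposite facet). Then 1/(m²·a_K²) ≤ ‖(E_K^T E_K)^{-1}‖ ≤ m/a_K², where ‖·‖ is the spectral norm. -/
/-!
With `q_j` the `j`-th column of `E (EᵀE)⁻¹` and `q_0 = -∑ q_j`, one has
`⟪q_i, x_k - x_l⟫ = δ_ik - δ_il`, so `q_i` is normal to the facet opposite `x_i` and takes the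
value `1` across it; hence `a_i ≥ 1/‖q_i‖`, with equality for `i ≥ 1`, where `x_j - q_j/‖q_j‖²`
lies on the facet. As `‖q_j‖²` is the `j`-th diagonal entry of `(EᵀE)⁻¹`, its trace is
`∑_{j ≥ 1} a_j⁻² ≤ m / a_K²`, and `‖q_i‖² ≤ m · trace` (Cauchy–Schwarz for `i = 0`) gives
`trace ≥ 1/(m a_K²)`. The largest eigenvalue of the positive semidefinite `(EᵀE)⁻¹` lies between
`trace / m` and `trace`.
-/

open Matrix RealInnerProductSpace Finset Metric

namespace Matrix

variable {n : Type*} [Fintype n] [DecidableEq n] {A : Matrix n n ℝ}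

lemma IsHermitian.trace_le_card_mul_sup'_eigenvalues (hA : A.IsHermitian)
    (h : (univ : Finset n).Nonempty) :
    A.trace ≤ Fintype.card n * univ.sup' h hA.eigenvalues := by
  rw [hA.trace_eq_sum_eigenvalues, RCLike.ofReal_real_eq_id]
  calc ∑ i, hA.eigenvalues i ≤ ∑ _i : n, univ.sup' h hA.eigenvalues :=
        sum_le_sum fun i hi => le_sup' _ hi
    _ = _ := by simp

lemma PosSemidef.sup'_eigenvalues_le_trace (hA : A.PosSemidef)
    (h : (univ : Finset n).Nonempty) :
    univ.sup' h hA.isHermitian.eigenvalues ≤ A.trace := by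
  rw [hA.isHermitian.trace_eq_sum_eigenvalues, RCLike.ofReal_real_eq_id]
  obtain ⟨i, -, hi⟩ := exists_mem_eq_sup' h hA.isHermitian.eigenvalues
  rw [hi]
  exact single_le_sum (fun j _ => hA.eigenvalues_nonneg j) (mem_univ i)

lemma isUnit_transpose_mul_self_of_rank_eq {m K : Type*} [Fintype m] [Field K] [LinearOrder K]
    [IsStrictOrderedRing K] {A : Matrix m n K} (h : A.rank = Fintype.card n) :
    IsUnit (Aᵀ * A) := by
  rw [← linearIndependent_cols_iff_isUnit, linearIndependent_iff_card_eq_finrank_span,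
    Set.finrank, ← rank_eq_finrank_span_cols, rank_transpose_mul_self, h]

end Matrix

section GramDual

variable {V : Type*} [NormedAddCommGroup V] [InnerProductSpace ℝ V]
  {ι : Type*} [Fintype ι] [DecidableEq ι] {e : ι → V}

/-- For `e = edgeVectors x` this is the paper's `q_j`, the `j`-th row of `(E⁺)ᵀ`. -/
noncomputable def gramDual (e : ι → V) (j : ι) : V := ∑ l, (gram ℝ e)⁻¹ l j • e l

lemma inv_gram_apply_comm (i j : ι) : (gram ℝ e)⁻¹ i j = (gram ℝ e)⁻¹ j i :=
  (isHermitian_gram ℝ e).inv.apply j i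

lemma inner_gramDual_left (he : IsUnit (gram ℝ e).det) (j k : ι) :
    ⟪gramDual e j, e k⟫ = if j = k then 1 else 0 := by
  simp only [gramDual, sum_inner, real_inner_smul_left, inv_gram_apply_comm _ j, ← gram_apply,
    ← mul_apply, nonsing_inv_mul _ he, one_apply]

lemma inner_gramDual_gramDual (he : IsUnit (gram ℝ e).det) (j k : ι) :
    ⟪gramDual e j, gramDual e k⟫ = (gram ℝ e)⁻¹ j k := by
  nth_rw 1 [gramDual]
  simp only [sum_inner, real_inner_smul_left, real_inner_comm _ (e _), inner_gramDual_left he]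
  simp [inv_gram_apply_comm k j]

lemma norm_gramDual_sq (he : IsUnit (gram ℝ e).det) (j : ι) :
    ‖gramDual e j‖ ^ 2 = (gram ℝ e)⁻¹ j j := by
  rw [← real_inner_self_eq_norm_sq, inner_gramDual_gramDual he]

lemma trace_inv_gram (he : IsUnit (gram ℝ e).det) :
    ((gram ℝ e)⁻¹).trace = ∑ j, ‖gramDual e j‖ ^ 2 := by
  simp only [norm_gramDual_sq he, trace, Matrix.diag]

lemma gramDual_ne_zero (he : IsUnit (gram ℝ e).det) (j : ι) : gramDual e j ≠ 0 := by
  intro h0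
  simpa [h0] using inner_gramDual_left he j j

end GramDual

section Simplex

variable {V : Type*} [NormedAddCommGroup V] [InnerProductSpace ℝ V] {m : ℕ} {x : Fin (m + 1) → V}

def edgeVectors (x : Fin (m + 1) → V) (l : Fin m) : V := x l.succ - x 0

noncomputable def simplexHeight (x : Fin (m + 1) → V) (i : Fin (m + 1)) : ℝ :=
  infDist (x i) (affineSpan ℝ (x '' ({i}ᶜ : Set (Fin (m + 1)))) : Set V)

noncomputable def barycentricGradient (x : Fin (m + 1) → V) : Fin (m + 1) → V :=
  Fin.cons (-∑ j, gramDual (edgeVectors x) j) (gramDual (edgeVectors x))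

lemma inner_barycentricGradient_sub_vertex_zero (hG : IsUnit (gram ℝ (edgeVectors x)).det)
    (i k : Fin (m + 1)) :
    ⟪barycentricGradient x i, x k - x 0⟫ =
      (if k = i then 1 else 0) - (if i = 0 then 1 else 0) := by
  have hedge : ∀ l : Fin m, x l.succ - x 0 = edgeVectors x l := fun l => rfl
  cases i using Fin.cases <;> cases k using Fin.cases <;>
    simp [barycentricGradient, hedge, sum_inner, inner_gramDual_left hG, Fin.succ_ne_zero, eq_comm]

lemma inner_barycentricGradient_sub_eq_one (hG : IsUnit (gram ℝ (edgeVectors x)).det)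
    {i k : Fin (m + 1)} (hk : k ≠ i) :
    ⟪barycentricGradient x i, x i - x k⟫ = 1 := by
  rw [← sub_sub_sub_cancel_right _ _ (x 0), inner_sub_right,
    inner_barycentricGradient_sub_vertex_zero hG, inner_barycentricGradient_sub_vertex_zero hG]
  simp [hk]

lemma barycentricGradient_ne_zero (hG : IsUnit (gram ℝ (edgeVectors x)).det) (hm : 0 < m)
    (i : Fin (m + 1)) : barycentricGradient x i ≠ 0 := by
  have : Nontrivial (Fin (m + 1)) := Fin.nontrivial_iff_two_le.2 (by omega)
  obtain ⟨k, hk⟩ := exists_ne i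
  intro h0
  simpa [h0] using inner_barycentricGradient_sub_eq_one hG hk

lemma inv_norm_le_infDist_affineSpan {v p : V} {s : Set V} (hs : s.Nonempty)
    (h : ∀ y ∈ s, ⟪v, p - y⟫ = 1) : ‖v‖⁻¹ ≤ infDist p (affineSpan ℝ s : Set V) := by
  have hspan : ∀ y ∈ affineSpan ℝ s, ⟪v, p - y⟫ = 1 := fun y hy => by
    refine affineSpan_induction hy h fun c u w z hu hw hz => ?_
    simp only [vsub_eq_sub, vadd_eq_add, inner_sub_right, inner_add_right,
      inner_smul_right] at hu hw hz ⊢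
    have huw : ⟪v, u⟫ = ⟪v, w⟫ := by linarith
    rw [huw, sub_self, mul_zero, zero_add, hz]
  obtain ⟨y₀, hy₀⟩ := hs
  have hv : 0 < ‖v‖ := norm_pos_iff.2 fun hv => by simpa [hv] using h y₀ hy₀
  rw [le_infDist ⟨y₀, subset_affineSpan ℝ s hy₀⟩]
  intro y hy
  rw [inv_le_iff_one_le_mul₀' hv, dist_eq_norm, ← hspan y hy]
  exact real_inner_le_norm v (p - y)

lemma inv_norm_barycentricGradient_le_simplexHeight (hG : IsUnit (gram ℝ (edgeVectors x)).det)
    (hm : 0 < m) (i : Fin (m + 1)) : ‖barycentricGradient x i‖⁻¹ ≤ simplexHeight x i := by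
  have : Nontrivial (Fin (m + 1)) := Fin.nontrivial_iff_two_le.2 (by omega)
  refine inv_norm_le_infDist_affineSpan ((Set.nonempty_compl_of_nontrivial i).image x) ?_
  rintro _ ⟨k, hk, rfl⟩
  exact inner_barycentricGradient_sub_eq_one hG hk

lemma simplexHeight_pos (hG : IsUnit (gram ℝ (edgeVectors x)).det) (hm : 0 < m)
    (i : Fin (m + 1)) : 0 < simplexHeight x i :=
  (inv_pos.2 (norm_pos_iff.2 (barycentricGradient_ne_zero hG hm i))).trans_le
    (inv_norm_barycentricGradient_le_simplexHeight hG hm i)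

lemma add_sum_smul_edgeVectors_mem_affineSpan {c : Fin m → ℝ} {j : Fin m} (hc : c j = 0) :
    x 0 + ∑ l, c l • edgeVectors x l ∈ affineSpan ℝ (x '' ({j.succ}ᶜ : Set (Fin (m + 1)))) := by
  rw [add_comm (x 0)]
  refine AffineSubspace.vadd_mem_of_mem_direction ?_
    (subset_affineSpan ℝ _ (Set.mem_image_of_mem x (Fin.succ_ne_zero j).symm))
  rw [direction_affineSpan]
  refine Submodule.sum_mem _ fun l _ => ?_
  by_cases hl : l = j
  · simp [hl, hc]
  · exact Submodule.smul_mem _ _ (vsub_mem_vectorSpan ℝ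
      (Set.mem_image_of_mem x ((Fin.succ_injective _).ne hl))
      (Set.mem_image_of_mem x (Fin.succ_ne_zero j).symm))

lemma simplexHeight_succ_le_inv_norm_gramDual (hG : IsUnit (gram ℝ (edgeVectors x)).det)
    (j : Fin m) : simplexHeight x j.succ ≤ ‖gramDual (edgeVectors x) j‖⁻¹ := by
  set N := (gram ℝ (edgeVectors x))⁻¹
  set q := gramDual (edgeVectors x) j
  have hN : N j j = ‖q‖ ^ 2 := (norm_gramDual_sq hG j).symm
  have hq : 0 < ‖q‖ := norm_pos_iff.2 (gramDual_ne_zero hG j)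
  -- `x j.succ - q / ‖q‖²` is the foot of the altitude from `x j.succ`
  have hfoot : x j.succ - (N j j)⁻¹ • q =
      x 0 + ∑ l, ((if l = j then 1 else 0) - (N j j)⁻¹ * N l j) • edgeVectors x l := by
    simp only [sub_smul, ite_smul, one_smul, zero_smul, sum_sub_distrib, sum_ite_eq',
      mem_univ, if_true, mul_smul, ← smul_sum]
    simp only [q, gramDual, edgeVectors]
    abel
  have hmem := add_sum_smul_edgeVectors_mem_affineSpan (x := x) (c := fun l =>
    (if l = j then 1 else 0) - (N j j)⁻¹ * N l j) (j := j) (by simp [hN, hq.ne'])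
  rw [← hfoot] at hmem
  calc simplexHeight x j.succ ≤ dist (x j.succ) (x j.succ - (N j j)⁻¹ • q) :=
        infDist_le_dist_of_mem hmem
    _ = ‖q‖⁻¹ := by
      rw [dist_eq_norm, sub_sub_cancel, norm_smul, hN, norm_inv, norm_pow, norm_norm]
      field_simp

lemma norm_barycentricGradient_sq_le (hG : IsUnit (gram ℝ (edgeVectors x)).det)
    (i : Fin (m + 1)) :
    ‖barycentricGradient x i‖ ^ 2 ≤ m * ((gram ℝ (edgeVectors x))⁻¹).trace := by
  rw [trace_inv_gram hG]
  cases i using Fin.cases with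
  | zero =>
    calc ‖barycentricGradient x 0‖ ^ 2 = ‖∑ j, gramDual (edgeVectors x) j‖ ^ 2 := by
          rw [barycentricGradient, Fin.cons_zero, norm_neg]
      _ ≤ (∑ j, ‖gramDual (edgeVectors x) j‖) ^ 2 := by gcongr; exact norm_sum_le _ _
      _ ≤ m * ∑ j, ‖gramDual (edgeVectors x) j‖ ^ 2 := by
          simpa using sq_sum_le_card_mul_sum_sq (s := univ)
            (f := fun j => ‖gramDual (edgeVectors x) j‖)
  | succ j =>
    rw [barycentricGradient, Fin.cons_succ]
    calc ‖gramDual (edgeVectors x) j‖ ^ 2 ≤ ∑ l, ‖gramDual (edgeVectors x) l‖ ^ 2 :=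
          single_le_sum (f := fun l => ‖gramDual (edgeVectors x) l‖ ^ 2)
            (fun l _ => sq_nonneg _) (mem_univ j)
      _ ≤ m * ∑ l, ‖gramDual (edgeVectors x) l‖ ^ 2 :=
          le_mul_of_one_le_left (sum_nonneg fun _ _ => sq_nonneg _) (by exact_mod_cast j.pos)

lemma one_div_mul_simplexHeight_sq_le_trace (hG : IsUnit (gram ℝ (edgeVectors x)).det)
    (hm : 0 < m) (i : Fin (m + 1)) :
    1 / (m * simplexHeight x i ^ 2) ≤ ((gram ℝ (edgeVectors x))⁻¹).trace := by
  have hq := norm_pos_iff.2 (barycentricGradient_ne_zero hG hm i)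
  have hm' : (0 : ℝ) < m := by exact_mod_cast hm
  calc 1 / (m * simplexHeight x i ^ 2) ≤ 1 / (m * ‖barycentricGradient x i‖⁻¹ ^ 2) := by
        gcongr; exact inv_norm_barycentricGradient_le_simplexHeight hG hm i
    _ = ‖barycentricGradient x i‖ ^ 2 / m := by field_simp
    _ ≤ _ := by
        rw [div_le_iff₀ hm', mul_comm]; exact norm_barycentricGradient_sq_le hG i

lemma trace_le_div_sq_of_le_simplexHeight (hG : IsUnit (gram ℝ (edgeVectors x)).det) {r : ℝ}
    (hr : 0 < r) (h : ∀ j : Fin m, r ≤ simplexHeight x j.succ) :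
    ((gram ℝ (edgeVectors x))⁻¹).trace ≤ m / r ^ 2 := by
  rw [trace_inv_gram hG]
  calc ∑ j, ‖gramDual (edgeVectors x) j‖ ^ 2 ≤ ∑ _j : Fin m, r⁻¹ ^ 2 := by
        refine sum_le_sum fun j _ => ?_
        have hq := norm_pos_iff.2 (gramDual_ne_zero hG j)
        gcongr
        exact (le_inv_comm₀ hr hq).1 ((h j).trans (simplexHeight_succ_le_inv_norm_gramDual hG j))
    _ = m / r ^ 2 := by simp [div_eq_mul_inv]

end Simplex

theorem min_height_bounds_spectral_norm_inv_gram_general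
    (d m : ℕ) (hm : 0 < m)
    (x : Fin (m + 1) → EuclideanSpace ℝ (Fin d))
    (E : Matrix (Fin d) (Fin m) ℝ)
    (hE : ∀ (i : Fin d) (j : Fin m), E i j = (x j.succ - x 0) i)
    (hrank : E.rank = m)
    (a : Fin (m + 1) → ℝ)
    (ha : ∀ j, a j = Metric.infDist (x j)
      (affineSpan ℝ (x '' ({j}ᶜ : Set (Fin (m + 1)))) : Set (EuclideanSpace ℝ (Fin d))))
    (aK : ℝ) (haK : aK = Finset.univ.inf' Finset.univ_nonempty a) :
    1 / ((m : ℝ) ^ 2 * aK ^ 2)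
        ≤ Finset.univ.sup' (Finset.univ_nonempty_iff.mpr (Fin.pos_iff_nonempty.mp hm))
            ((Matrix.isHermitian_conjTranspose_mul_self E :
              (Eᵀ * E).IsHermitian).inv : ((Eᵀ * E)⁻¹).IsHermitian).eigenvalues
      ∧ Finset.univ.sup' (Finset.univ_nonempty_iff.mpr (Fin.pos_iff_nonempty.mp hm))
            ((Matrix.isHermitian_conjTranspose_mul_self E :
              (Eᵀ * E).IsHermitian).inv : ((Eᵀ * E)⁻¹).IsHermitian).eigenvalues
          ≤ m / aK ^ 2 := by
  have hgram : Eᵀ * E = gram ℝ (edgeVectors x) := by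
    ext i j
    simp [gram_apply, mul_apply, hE, edgeVectors, PiLp.inner_apply, mul_comm]
  have hG : IsUnit (gram ℝ (edgeVectors x)).det := by
    rw [← hgram, ← isUnit_iff_isUnit_det]
    exact isUnit_transpose_mul_self_of_rank_eq (by simpa using hrank)
  obtain rfl : a = simplexHeight x := funext ha
  obtain ⟨i, -, hi⟩ := exists_mem_eq_inf' univ_nonempty (simplexHeight x)
  have haK_le : ∀ j, aK ≤ simplexHeight x j := fun j => haK ▸ inf'_le _ (mem_univ j)
  rw [hi] at haK
  have hm' : (0 : ℝ) < m := by exact_mod_cast hm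
  have htrace_ge : 1 / (m * aK ^ 2) ≤ ((Eᵀ * E)⁻¹).trace := by
    rw [haK, hgram]; exact one_div_mul_simplexHeight_sq_le_trace hG hm i
  have htrace_le : ((Eᵀ * E)⁻¹).trace ≤ m / aK ^ 2 := by
    rw [hgram]
    exact trace_le_div_sq_of_le_simplexHeight hG (haK ▸ simplexHeight_pos hG hm i)
      fun j => haK_le j.succ
  have hne : (univ : Finset (Fin m)).Nonempty :=
    univ_nonempty_iff.mpr (Fin.pos_iff_nonempty.mp hm)
  have hsup_le :=
    ((posSemidef_conjTranspose_mul_self E : (Eᵀ * E).PosSemidef).inv).sup'_eigenvalues_le_trace hne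
  have hsup_ge := ((isHermitian_conjTranspose_mul_self E : (Eᵀ * E).IsHermitian).inv
    ).trace_le_card_mul_sup'_eigenvalues hne
  rw [Fintype.card_fin] at hsup_ge
  refine ⟨?_, hsup_le.trans htrace_le⟩
  calc 1 / ((m : ℝ) ^ 2 * aK ^ 2) = 1 / (m * aK ^ 2) / m := by ring
    _ ≤ ((Eᵀ * E)⁻¹).trace / m := by gcongr
    _ ≤ _ := by rw [div_le_iff₀ hm', mul_comm]; exact hsup_ge

/-- For an m-simplex in ℝ^d with full-column-rank edge matrix `E` and minimum
height `a_K`, `1/(m²·a_K²) ≤ ‖(EᵀE)⁻¹‖ ≤ m/a_K²` (spectral norm = largest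
eigenvalue). -/
theorem min_height_bounds_spectral_norm_inv_gram
    (d m : ℕ) (hm : 0 < m) (hmd : m ≤ d)
    (x : Fin (m + 1) → EuclideanSpace ℝ (Fin d))
    (hx : AffineIndependent ℝ x)
    (E : Matrix (Fin d) (Fin m) ℝ)
    (hE : ∀ (i : Fin d) (j : Fin m), E i j = (x j.succ - x 0) i)
    (hrank : E.rank = m)
    (a : Fin (m + 1) → ℝ)
    (ha : ∀ j, a j = Metric.infDist (x j)
      (affineSpan ℝ (x '' ({j}ᶜ : Set (Fin (m + 1)))) : Set (EuclideanSpace ℝ (Fin d))))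
    (aK : ℝ) (haK : aK = Finset.univ.inf' Finset.univ_nonempty a) :
    1 / ((m : ℝ) ^ 2 * aK ^ 2)
        ≤ Finset.univ.sup' (Finset.univ_nonempty_iff.mpr (Fin.pos_iff_nonempty.mp hm))
            ((Matrix.isHermitian_conjTranspose_mul_self E :
              (Eᵀ * E).IsHermitian).inv : ((Eᵀ * E)⁻¹).IsHermitian).eigenvalues
      ∧ Finset.univ.sup' (Finset.univ_nonempty_iff.mpr (Fin.pos_iff_nonempty.mp hm))
            ((Matrix.isHermitian_conjTranspose_mul_self E :
              (Eᵀ * E).IsHermitian).inv : ((Eᵀ * E)⁻¹).IsHermitian).eigenvalues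
          ≤ m / aK ^ 2 :=
  min_height_bounds_spectral_norm_inv_gram_general d m hm x E hE hrank a ha aK haK
end

section
/- Let R ∈ ℝ^{m×m} be invertible with singular values σ_1,...,σ_m, and let a_R denote the minimum height of the m-simplex in ℝ^m spanned by the columns of R (with one vertex at the origin). Then each singular value satisfies σ_i ≥ a_R/√m, and consequently det(R^T R)^{1/2} = ∏ σ_i ≥ a_R^m / m^{m/2}. -/
/-! A unit vector `x ∈ ℝ^m` has a coordinate with `|x j| ≥ 1/√m`. Dividing `R x = ∑ x_k r_k` by
`x j` shows that the column `r_j` lies within `‖R x‖ / |x j| ≤ √m ‖R x‖` of the span of the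
other columns, which is the affine span of the facet opposite `r_j` since that facet contains the
origin. For a unit eigenvector `x` of `RᵀR` with eigenvalue `σ_i²` we have `‖R x‖ = σ_i`, so
`a_R ≤ √m σ_i`; the determinant bound is the product of these. -/

open Matrix

theorem EuclideanSpace.exists_norm_le_sqrt_card_mul_abs {ι : Type*} [Fintype ι]
    {x : EuclideanSpace ℝ ι} (hx : x ≠ 0) : ∃ j, ‖x‖ ≤ √(Fintype.card ι) * |x j| := by
  obtain ⟨i, -⟩ : ∃ i, x i ≠ 0 := by
    contrapose! hx
    exact PiLp.ext hx
  obtain ⟨j, -, hj⟩ := Finset.univ.exists_max_image (fun k => |x k|) ⟨i, Finset.mem_univ i⟩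
  refine ⟨j, ?_⟩
  calc ‖x‖ = √(∑ k, ‖x k‖ ^ 2) := EuclideanSpace.norm_eq x
    _ ≤ √(∑ _k : ι, |x j| ^ 2) := by
      gcongr with k
      exact hj k (Finset.mem_univ k)
    _ = √(Fintype.card ι) * |x j| := by
      rw [Finset.sum_const, Finset.card_univ, nsmul_eq_mul, Real.sqrt_mul (Nat.cast_nonneg _),
        Real.sqrt_sq (abs_nonneg _)]

section Heights

variable {E : Type*} [NormedAddCommGroup E] [NormedSpace ℝ E]

theorem infDist_le_norm_sum_smul_div_abs {ι : Type*} [Fintype ι] [DecidableEq ι]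
    (r : ι → E) {x : ι → ℝ} {j : ι} (hxj : x j ≠ 0) :
    Metric.infDist (r j) (Submodule.span ℝ (r '' {j}ᶜ)) ≤ ‖∑ k, x k • r k‖ / |x j| := by
  set S := ∑ k ∈ Finset.univ.erase j, x k • r k
  have hS : S ∈ Submodule.span ℝ (r '' {j}ᶜ) :=
    Submodule.sum_mem _ fun k hk => Submodule.smul_mem _ _ <|
      Submodule.subset_span ⟨k, Finset.ne_of_mem_erase hk, rfl⟩
  have hdiff : r j - -(x j)⁻¹ • S = (x j)⁻¹ • ∑ k, x k • r k := by
    rw [← Finset.add_sum_erase _ _ (Finset.mem_univ j), smul_add, smul_smul, inv_mul_cancel₀ hxj,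
      one_smul, neg_smul, sub_neg_eq_add]
  calc Metric.infDist (r j) (Submodule.span ℝ (r '' {j}ᶜ))
      ≤ dist (r j) (-(x j)⁻¹ • S) :=
        Metric.infDist_le_dist_of_mem (Submodule.smul_mem _ _ hS)
    _ = ‖∑ k, x k • r k‖ / |x j| := by
      rw [dist_eq_norm, hdiff, norm_smul, norm_inv, Real.norm_eq_abs, inv_mul_eq_div]

theorem infDist_affineSpan_le_norm_sum_smul_div_abs {m : ℕ} (v : Fin (m + 1) → E) (hv0 : v 0 = 0)
    {x : Fin m → ℝ} {j : Fin m} (hxj : x j ≠ 0) :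
    Metric.infDist (v j.succ) (affineSpan ℝ (v '' {j.succ}ᶜ))
      ≤ ‖∑ k, x k • v k.succ‖ / |x j| := by
  have h0 : (0 : E) ∈ v '' {j.succ}ᶜ := ⟨0, (Fin.succ_ne_zero j).symm, hv0⟩
  have hsub : (Submodule.span ℝ ((v ∘ Fin.succ) '' {j}ᶜ) : Set E)
      ⊆ affineSpan ℝ (v '' {j.succ}ᶜ) := by
    rw [← Set.insert_eq_of_mem h0, affineSpan_insert_zero]
    refine Submodule.span_mono ?_
    rintro _ ⟨k, hk, rfl⟩
    exact ⟨k.succ, Fin.succ_injective _ |>.ne hk, rfl⟩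
  calc Metric.infDist (v j.succ) (affineSpan ℝ (v '' {j.succ}ᶜ))
      ≤ Metric.infDist (v j.succ) (Submodule.span ℝ ((v ∘ Fin.succ) '' {j}ᶜ)) :=
        Metric.infDist_le_infDist_of_subset hsub ⟨0, Submodule.zero_mem _⟩
    _ ≤ ‖∑ k, x k • v k.succ‖ / |x j| :=
        infDist_le_norm_sum_smul_div_abs (v ∘ Fin.succ) hxj

theorem exists_infDist_affineSpan_le_sqrt_mul_norm_sum_smul {m : ℕ} (v : Fin (m + 1) → E)
    (hv0 : v 0 = 0) {x : EuclideanSpace ℝ (Fin m)} (hx : ‖x‖ = 1) :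
    ∃ j : Fin m, Metric.infDist (v j.succ) (affineSpan ℝ (v '' {j.succ}ᶜ))
      ≤ √m * ‖∑ k, x k • v k.succ‖ := by
  obtain ⟨j, hj⟩ := EuclideanSpace.exists_norm_le_sqrt_card_mul_abs
    (norm_ne_zero_iff.mp (hx ▸ one_ne_zero))
  rw [hx, Fintype.card_fin] at hj
  have hxj : x j ≠ 0 := fun h => by norm_num [h] at hj
  refine ⟨j, (infDist_affineSpan_le_norm_sum_smul_div_abs v hv0 hxj).trans ?_⟩
  rw [div_le_iff₀ (abs_pos.mpr hxj), mul_right_comm]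
  exact le_mul_of_one_le_left (norm_nonneg _) hj

end Heights

theorem EuclideanSpace.sum_smul_eq_toLp_mulVec {𝕜 : Type*} [RCLike 𝕜] {m n : Type*} [Fintype n]
    (B : Matrix m n 𝕜) {c : n → EuclideanSpace 𝕜 m} (hc : ∀ k i, c k i = B i k) (x : n → 𝕜) :
    ∑ k, x k • c k = WithLp.toLp 2 (B *ᵥ x) := by
  ext i
  simp [hc, mulVec, dotProduct, mul_comm]

theorem Matrix.IsHermitian.eigenvalues_eq_norm_mulVec_sq {𝕜 : Type*} [RCLike 𝕜] {m n : Type*}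
    [Fintype m] [Fintype n] [DecidableEq n] {A : Matrix n n 𝕜} (hA : A.IsHermitian)
    {B : Matrix m n 𝕜} (hAB : A = Bᴴ * B) (i : n) :
    hA.eigenvalues i = ‖WithLp.toLp 2 (B *ᵥ hA.eigenvectorBasis i)‖ ^ 2 := by
  subst hAB
  rw [hA.eigenvalues_eq, ← mulVec_mulVec, dotProduct_mulVec, ← star_mulVec,
    ← @inner_self_eq_norm_sq 𝕜, EuclideanSpace.inner_eq_star_dotProduct, dotProduct_comm]

theorem exists_infDist_affineSpan_le_sqrt_mul_sqrt_eigenvalues {m : ℕ} {n : Type*} [Fintype n]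
    (R : Matrix n (Fin m) ℝ) (hH : (Rᵀ * R).IsHermitian) (v : Fin (m + 1) → EuclideanSpace ℝ n)
    (hv0 : v 0 = 0) (hvs : ∀ (j : Fin m) (i : n), v j.succ i = R i j) (i : Fin m) :
    ∃ j : Fin m, Metric.infDist (v j.succ) (affineSpan ℝ (v '' {j.succ}ᶜ))
      ≤ √m * √(hH.eigenvalues i) := by
  obtain ⟨j, hj⟩ := exists_infDist_affineSpan_le_sqrt_mul_norm_sum_smul v hv0
    (hH.eigenvectorBasis.orthonormal.1 i)
  refine ⟨j, hj.trans_eq ?_⟩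
  rw [EuclideanSpace.sum_smul_eq_toLp_mulVec R (c := fun k => v k.succ) hvs,
    hH.eigenvalues_eq_norm_mulVec_sq (B := R) (by rw [conjTranspose_eq_transpose_of_trivial]),
    Real.sqrt_sq (norm_nonneg _)]

/-- For invertible `R ∈ ℝ^{m×m}` with singular values `σ_i` and minimum height
`a_R` of the simplex spanned by `0` and the columns of `R`, each `σ_i ≥ a_R/√m`,
and consequently `det(RᵀR)^{1/2} = ∏σ_i ≥ a_R^m/m^{m/2}`. -/
theorem singular_values_ge_min_height
    (m : ℕ)
    (R : Matrix (Fin m) (Fin m) ℝ)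
    (σ : Fin m → ℝ)
    (hσ : ∀ i, σ i = Real.sqrt
      ((by simpa using Matrix.isHermitian_conjTranspose_mul_self R : (Rᵀ * R).IsHermitian).eigenvalues i))
    (v : Fin (m + 1) → EuclideanSpace ℝ (Fin m))
    (hv0 : v 0 = 0)
    (hvs : ∀ (j : Fin m) (i : Fin m), v j.succ i = R i j)
    (a : Fin (m + 1) → ℝ)
    (ha : ∀ j, a j = Metric.infDist (v j)
      (affineSpan ℝ (v '' ({j}ᶜ : Set (Fin (m + 1)))) : Set (EuclideanSpace ℝ (Fin m))))
    (aR : ℝ) (haR : aR = Finset.univ.inf' Finset.univ_nonempty a) :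
    (∀ i, aR / Real.sqrt m ≤ σ i)
      ∧ Real.sqrt (Rᵀ * R).det = ∏ i, σ i
      ∧ aR ^ m / (m : ℝ) ^ ((m : ℝ) / 2) ≤ Real.sqrt (Rᵀ * R).det := by
  have hH : (Rᵀ * R).IsHermitian := by simpa using isHermitian_conjTranspose_mul_self R
  have hσ_lower : ∀ i, aR / √m ≤ σ i := by
    intro i
    obtain ⟨j, hj⟩ := exists_infDist_affineSpan_le_sqrt_mul_sqrt_eigenvalues R hH v hv0 hvs i
    refine div_le_of_le_mul₀ (Real.sqrt_nonneg _) (hσ i ▸ Real.sqrt_nonneg _) ?_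
    calc aR ≤ a j.succ := haR ▸ Finset.inf'_le a (Finset.mem_univ _)
      _ ≤ σ i * √m := by rw [ha, hσ i, mul_comm]; exact hj
  have hdet : √(Rᵀ * R).det = ∏ i, σ i := by
    have heig_nonneg : ∀ i ∈ Finset.univ, 0 ≤ hH.eigenvalues i := fun i _ =>
      eigenvalues_conjTranspose_mul_self_nonneg R i
    rw [hH.det_eq_prod_eigenvalues]
    simp only [RCLike.ofReal_real_eq_id, id, Real.sqrt_prod _ heig_nonneg, hσ]
  have haR_nonneg : 0 ≤ aR :=
    haR ▸ Finset.le_inf' _ _ fun j _ => ha j ▸ Metric.infDist_nonneg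
  refine ⟨hσ_lower, hdet, ?_⟩
  rw [hdet, Real.rpow_div_two_eq_sqrt _ m.cast_nonneg, Real.rpow_natCast]
  calc aR ^ m / √m ^ m = ∏ _i : Fin m, aR / √m := by simp
    _ ≤ ∏ i, σ i := Finset.prod_le_prod (fun _ _ => by positivity) fun i _ => hσ_lower i
end

section
/- Let M be a symmetric positive definite d×d matrix and K an m-simplex in ℝ^d with full-rank edge matrix E_K. Let a_{K,M} be the minimum height of K measured in the metric M (equivalently the minimum height in Euclidean metric of the simplex M^{1/2}K). Then |K|_M ≥ a_{K,M}^m / (m^{m/2}·m!), where |K|_M = (1/m!)·det(E_K^T M E_K)^{1/2}. -/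
/-!
With `S = M^{1/2}`, the Gram matrix `EᵀME` equals `FᵀF` for `F = SE`, whose columns are the edges
`y (j+1) - y 0` of the simplex `SK`. If `|c j|` is the largest coordinate of `c`, then
`F c = ∑ c i (y (i+1) - y 0)` is `c j` times the distance from `y (j+1)` to a point of the opposite
face, so `‖F c‖ ≥ a |c j| ≥ a ‖c‖ / √m` for the minimum height `a`. Hence every eigenvalue of
`FᵀF` is at least `a² / m`, and `det (FᵀF) ≥ (a² / m)^m`.
-/

open Matrix

section

open scoped ComplexOrder

/-- The square root of a positive semidefinite matrix, as defined in Mathlib of December 2024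
(removed since then). -/
noncomputable def Matrix.PosSemidef.sqrt {n : Type*} {𝕜 : Type*} [Fintype n] [RCLike 𝕜]
    [DecidableEq n] {A : Matrix n n 𝕜} (hA : A.PosSemidef) : Matrix n n 𝕜 :=
  hA.1.eigenvectorUnitary.1 * diagonal ((↑) ∘ Real.sqrt ∘ hA.1.eigenvalues) *
    (star hA.1.eigenvectorUnitary : Matrix n n 𝕜)

end

namespace Matrix.PosSemidef

open scoped ComplexOrder

variable {n 𝕜 : Type*} [Fintype n] [RCLike 𝕜] [DecidableEq n] {A : Matrix n n 𝕜}

theorem isHermitian_sqrt (hA : A.PosSemidef) : hA.sqrt.IsHermitian := by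
  rw [sqrt, IsHermitian, conjTranspose_mul, conjTranspose_mul, ← star_eq_conjTranspose,
    star_star, diagonal_conjTranspose, ← star_eq_conjTranspose, Matrix.mul_assoc]
  congr 3
  funext k
  simp

theorem sqrt_mul_self (hA : A.PosSemidef) : hA.sqrt * hA.sqrt = A := by
  set U := hA.1.eigenvectorUnitary
  have hU : (star U).1 * U.1 = 1 := Unitary.star_mul_self_of_mem U.2
  conv_rhs => rw [hA.1.spectral_theorem, Unitary.conjStarAlgAut_apply]
  calc hA.sqrt * hA.sqrt
      = U.1 * (diagonal ((↑) ∘ Real.sqrt ∘ hA.1.eigenvalues) * ((star U).1 * U.1) *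
          diagonal ((↑) ∘ Real.sqrt ∘ hA.1.eigenvalues)) * (star U).1 := by
        simp only [sqrt, Matrix.mul_assoc]; rfl
    _ = _ := by
        rw [hU, Matrix.mul_one, diagonal_mul_diagonal]
        congr 3
        funext k
        simp [← RCLike.ofReal_mul, Real.mul_self_sqrt (hA.eigenvalues_nonneg k)]

end Matrix.PosSemidef

theorem pow_card_le_det_transpose_mul_self {m n : Type*} [Fintype m] [Fintype n] [DecidableEq n]
    (A : Matrix m n ℝ) {μ : ℝ} (hμ : 0 ≤ μ) (h : ∀ c, μ * (c ⬝ᵥ c) ≤ (A *ᵥ c) ⬝ᵥ (A *ᵥ c)) :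
    μ ^ Fintype.card n ≤ (Aᵀ * A).det := by
  have hG : (Aᵀ * A).IsHermitian := by
    simpa using isHermitian_conjTranspose_mul_self A
  have heig : ∀ i, μ ≤ hG.eigenvalues i := by
    intro i
    set v := WithLp.ofLp (hG.eigenvectorBasis i)
    have hv : v ⬝ᵥ v = 1 := by
      have := real_inner_self_eq_norm_sq (hG.eigenvectorBasis i)
      rw [hG.eigenvectorBasis.orthonormal.1 i, EuclideanSpace.inner_eq_star_dotProduct] at this
      simpa using this
    calc μ = μ * (v ⬝ᵥ v) := by rw [hv, mul_one]
      _ ≤ (A *ᵥ v) ⬝ᵥ (A *ᵥ v) := h v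
      _ = v ⬝ᵥ (Aᵀ * A) *ᵥ v := by rw [← mulVec_mulVec, dotProduct_mulVec v Aᵀ, vecMul_transpose]
      _ = hG.eigenvalues i := by simp [hG.eigenvalues_eq, v]
  calc μ ^ Fintype.card n = ∏ _i : n, μ := by simp
    _ ≤ ∏ i, hG.eigenvalues i := Finset.prod_le_prod (fun _ _ => hμ) fun i _ => heig i
    _ = (Aᵀ * A).det := by simp [hG.det_eq_prod_eigenvalues]

theorem exists_dotProduct_self_le_card_mul_sq {ι : Type*} [Fintype ι] [Nonempty ι] (c : ι → ℝ) :
    ∃ j, c ⬝ᵥ c ≤ Fintype.card ι * c j ^ 2 := by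
  obtain ⟨j, -, hj⟩ := Finset.exists_max_image Finset.univ (fun i => |c i|) Finset.univ_nonempty
  refine ⟨j, ?_⟩
  calc c ⬝ᵥ c = ∑ i, |c i| ^ 2 := by simp [dotProduct, sq]
    _ ≤ ∑ _i : ι, |c j| ^ 2 :=
      Finset.sum_le_sum fun i hi => pow_le_pow_left₀ (abs_nonneg _) (hj i hi) 2
    _ = Fintype.card ι * c j ^ 2 := by simp

theorem Real.sqrt_sq_div_natCast_pow {a : ℝ} (ha : 0 ≤ a) (n : ℕ) :
    √((a ^ 2 / n) ^ n) = a ^ n / (n : ℝ) ^ ((n : ℝ) / 2) := by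
  rw [div_pow, ← pow_mul, mul_comm, pow_mul, Real.sqrt_div (by positivity),
    Real.sqrt_sq (by positivity), Real.sqrt_eq_rpow, ← Real.rpow_natCast (n : ℝ) n,
    ← Real.rpow_mul (Nat.cast_nonneg n), mul_one_div]

theorem infDist_affineSpan_mul_abs_le_norm_sum_smul_sub {V : Type*} [NormedAddCommGroup V]
    [NormedSpace ℝ V] {m : ℕ} (y : Fin (m + 1) → V) (c : Fin m → ℝ) (j : Fin m) :
    Metric.infDist (y j.succ) (affineSpan ℝ (y '' {j.succ}ᶜ) : Set V) * |c j|
      ≤ ‖∑ i, c i • (y i.succ - y 0)‖ := by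
  rcases eq_or_ne (c j) 0 with hc | hc
  · simp [hc]
  set S := affineSpan ℝ (y '' {j.succ}ᶜ)
  set w := ∑ i, c i • (y i.succ - y 0)
  -- Solving the definition of `w` for `y j.succ` exhibits a point of the opposite face.
  have hfoot : y j.succ - (c j)⁻¹ • w
      = (-(c j)⁻¹ • ∑ i ∈ Finset.univ.erase j, c i • (y i.succ - y 0)) +ᵥ y 0 := by
    have hsplit : w = c j • (y j.succ - y 0) + ∑ i ∈ Finset.univ.erase j, c i • (y i.succ - y 0) :=
      (Finset.add_sum_erase _ _ (Finset.mem_univ j)).symm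
    rw [hsplit, smul_add, smul_smul, inv_mul_cancel₀ hc, one_smul, neg_smul, vadd_eq_add]
    abel
  have hmem : y j.succ - (c j)⁻¹ • w ∈ S := by
    rw [hfoot]
    refine AffineSubspace.vadd_mem_of_mem_direction ?_
      (subset_affineSpan ℝ _ ⟨0, (Fin.succ_ne_zero j).symm, rfl⟩)
    rw [direction_affineSpan]
    refine Submodule.smul_mem _ _ (Submodule.sum_mem _ fun i hi => Submodule.smul_mem _ _ ?_)
    have hij : i.succ ≠ j.succ := Fin.succ_injective _ |>.ne (Finset.ne_of_mem_erase hi)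
    exact vsub_mem_vectorSpan ℝ ⟨i.succ, hij, rfl⟩ ⟨0, (Fin.succ_ne_zero j).symm, rfl⟩
  calc Metric.infDist (y j.succ) S * |c j|
      ≤ dist (y j.succ) (y j.succ - (c j)⁻¹ • w) * |c j| := by
        gcongr; exact Metric.infDist_le_dist_of_mem hmem
    _ = ‖w‖ := by
        rw [dist_eq_norm, sub_sub_cancel, norm_smul, norm_inv, Real.norm_eq_abs]
        field_simp

theorem sq_div_mul_dotProduct_self_le_norm_sum_smul_sub_sq {V : Type*} [NormedAddCommGroup V]
    [NormedSpace ℝ V] {m : ℕ} (hm : 0 < m) (y : Fin (m + 1) → V) {h : ℝ} (h0 : 0 ≤ h)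
    (hh : ∀ j : Fin m, h ≤ Metric.infDist (y j.succ) (affineSpan ℝ (y '' {j.succ}ᶜ) : Set V))
    (c : Fin m → ℝ) :
    h ^ 2 / m * (c ⬝ᵥ c) ≤ ‖∑ i, c i • (y i.succ - y 0)‖ ^ 2 := by
  have : Nonempty (Fin m) := ⟨⟨0, hm⟩⟩
  obtain ⟨j, hj⟩ := exists_dotProduct_self_le_card_mul_sq c
  have hheight : h * |c j| ≤ ‖∑ i, c i • (y i.succ - y 0)‖ :=
    (mul_le_mul_of_nonneg_right (hh j) (abs_nonneg _)).trans
      (infDist_affineSpan_mul_abs_le_norm_sum_smul_sub y c j)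
  calc h ^ 2 / m * (c ⬝ᵥ c) ≤ h ^ 2 / m * (m * c j ^ 2) := by
        simpa using mul_le_mul_of_nonneg_left hj (by positivity : 0 ≤ h ^ 2 / m)
    _ = (h * |c j|) ^ 2 := by field_simp; rw [sq_abs]
    _ ≤ ‖∑ i, c i • (y i.succ - y 0)‖ ^ 2 := by gcongr

theorem mulVec_dotProduct_mulVec_eq_norm_sum_smul_sq {ι κ : Type*} [Fintype ι] [Fintype κ]
    {F : Matrix ι κ ℝ} {v : κ → EuclideanSpace ℝ ι} (hF : ∀ i j, F i j = v j i) (c : κ → ℝ) :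
    (F *ᵥ c) ⬝ᵥ (F *ᵥ c) = ‖∑ j, c j • v j‖ ^ 2 := by
  have hFc : F *ᵥ c = WithLp.ofLp (∑ j, c j • v j) := by
    ext i; simp [mulVec, dotProduct, hF, mul_comm]
  rw [hFc, ← real_inner_self_eq_norm_sq, EuclideanSpace.inner_eq_star_dotProduct]
  simp

theorem metric_size_ge_min_height_pow_general
    (d m : ℕ) (hm : 0 < m)
    (M : Matrix (Fin d) (Fin d) ℝ) (hM : M.PosDef)
    (x : Fin (m + 1) → EuclideanSpace ℝ (Fin d))
    (E : Matrix (Fin d) (Fin m) ℝ)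
    (hE : ∀ (i : Fin d) (j : Fin m), E i j = (x j.succ - x 0) i)
    (y : Fin (m + 1) → EuclideanSpace ℝ (Fin d))
    (hy : ∀ (j : Fin (m + 1)) (i : Fin d),
      y j i = hM.posSemidef.sqrt.mulVec (fun k => x j k) i)
    (a : Fin (m + 1) → ℝ)
    (ha : ∀ j, a j = Metric.infDist (y j)
      (affineSpan ℝ (y '' ({j}ᶜ : Set (Fin (m + 1)))) : Set (EuclideanSpace ℝ (Fin d))))
    (aKM : ℝ) (haKM : aKM = Finset.univ.inf' Finset.univ_nonempty a) :
    aKM ^ m / ((m : ℝ) ^ ((m : ℝ) / 2) * (Nat.factorial m : ℝ))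
      ≤ (1 / (Nat.factorial m : ℝ)) * Real.sqrt (Eᵀ * M * E).det := by
  set S := hM.posSemidef.sqrt
  have hEME : Eᵀ * M * E = (S * E)ᵀ * (S * E) := by
    rw [← hM.posSemidef.sqrt_mul_self, transpose_mul, ← conjTranspose_eq_transpose_of_trivial S,
      hM.posSemidef.isHermitian_sqrt.eq]
    simp only [Matrix.mul_assoc]; rfl
  have hcols (i : Fin d) (j : Fin m) : (S * E) i j = (y j.succ - y 0) i := by
    simp [mul_apply, hE, hy, mulVec, dotProduct, mul_sub]
  have hheight (j : Fin (m + 1)) : aKM ≤ Metric.infDist (y j)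
      (affineSpan ℝ (y '' {j}ᶜ) : Set (EuclideanSpace ℝ (Fin d))) :=
    ha j ▸ haKM ▸ Finset.inf'_le _ (Finset.mem_univ j)
  have haKM_nonneg : 0 ≤ aKM :=
    haKM ▸ Finset.le_inf' _ _ fun j _ => ha j ▸ Metric.infDist_nonneg
  have hdet : (aKM ^ 2 / m) ^ m ≤ (Eᵀ * M * E).det := by
    simpa [hEME] using pow_card_le_det_transpose_mul_self (S * E) (by positivity) fun c => by
      rw [mulVec_dotProduct_mulVec_eq_norm_sum_smul_sq hcols]
      exact sq_div_mul_dotProduct_self_le_norm_sum_smul_sub_sq hm y haKM_nonneg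
        (fun j => hheight j.succ) c
  rw [← div_div, one_div_mul_eq_div, ← Real.sqrt_sq_div_natCast_pow haKM_nonneg]
  gcongr

/-- For a symmetric positive definite metric `M` and an m-simplex `K ⊂ ℝ^d` with
full-column-rank edge matrix `E`, with `a_{K,M}` the minimum (Euclidean) height of
the simplex `M^{1/2}K`, one has `|K|_M ≥ a_{K,M}^m/(m^{m/2}·m!)`, where
`|K|_M = (1/m!)·det(EᵀME)^{1/2}`. -/
theorem metric_size_ge_min_height_pow
    (d m : ℕ) (hm : 0 < m) (hmd : m ≤ d)
    (M : Matrix (Fin d) (Fin d) ℝ) (hM : M.PosDef)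
    (x : Fin (m + 1) → EuclideanSpace ℝ (Fin d))
    (hx : AffineIndependent ℝ x)
    (E : Matrix (Fin d) (Fin m) ℝ)
    (hE : ∀ (i : Fin d) (j : Fin m), E i j = (x j.succ - x 0) i)
    (hrank : E.rank = m)
    (y : Fin (m + 1) → EuclideanSpace ℝ (Fin d))
    (hy : ∀ (j : Fin (m + 1)) (i : Fin d),
      y j i = hM.posSemidef.sqrt.mulVec (fun k => x j k) i)
    (a : Fin (m + 1) → ℝ)
    (ha : ∀ j, a j = Metric.infDist (y j)
      (affineSpan ℝ (y '' ({j}ᶜ : Set (Fin (m + 1)))) : Set (EuclideanSpace ℝ (Fin d))))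
    (aKM : ℝ) (haKM : aKM = Finset.univ.inf' Finset.univ_nonempty a) :
    aKM ^ m / ((m : ℝ) ^ ((m : ℝ) / 2) * (Nat.factorial m : ℝ))
      ≤ (1 / (Nat.factorial m : ℝ)) * Real.sqrt (Eᵀ * M * E).det :=
  metric_size_ge_min_height_pow_general d m hm M hM x E hE y hy a ha aKM haKM
end
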